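/- arXiv:2509.12823 — 6 statements merged into one kernel-verified Lean document; each statement's English description precedes it below -/
import Mathlib

section
/- Let $\mathfrak{g}_{4,3}$ be the real Lie algebra with basis $(e_1,e_2,e_3,e_4)$, nonzero brackets $[e_4,e_1]=e_1$, $[e_4,e_3]=e_2$, and let $\widetilde{\mathfrak{g}} = \mathfrak{g}_{4,3} \oplus \mathbf{R}e_5$ be the central extension defined by the cocycle $\omega_4 \wedge \omega_2$ (so the additional nonzero bracket is $[e_4,e_2]=e_5$). Then $e_5$ lies in $C^3\widetilde{\mathfrak{g}}$ but not in $C^4\widetilde{\mathfrak{g}}$; that is, the central depth of $e_5$ in $\widetilde{\mathfrak{g}}$ is exactly 3. -/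
/-!
The bracket table shows that bracketing with any basis vector pushes the flag
`⟨e₁, e₂, e₅⟩ ⊇ ⟨e₁, e₅⟩ ⊇ ⟨e₁⟩` one step down, and `C²𝔤̃ = [𝔤̃, 𝔤̃] ⊆ ⟨e₁, e₂, e₅⟩`.
Hence `C⁴𝔤̃ ⊆ ⟨e₁⟩ ∌ e₅`, while `e₅ = [e₄, [e₄, e₃]] ∈ C³𝔤̃`.
-/

/-- Lower central series of the whole Lie algebra `g`: `lcsTop g (j-1)` is the paper's
`C^j 𝔤` (so `lcsTop g 0 = ⊤ = C^1 𝔤`). -/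
def lcsTop (g : Type*) [LieRing g] [LieAlgebra ℝ g] : ℕ → Submodule ℝ g
  | 0 => ⊤
  | j + 1 => Submodule.span ℝ {z | ∃ x : g, ∃ y ∈ lcsTop g j, z = ⁅x, y⁆}

open Submodule

section LowerCentralSeries

variable {L : Type*} [LieRing L] [LieAlgebra ℝ L]

theorem lie_mem_lcsTop_succ (x : L) {y : L} {j : ℕ} (hy : y ∈ lcsTop L j) :
    ⁅x, y⁆ ∈ lcsTop L (j + 1) :=
  subset_span ⟨x, y, hy, rfl⟩

theorem lie_mem_of_mem_span {s t : Set L} {S : Submodule ℝ L}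
    (h : ∀ x ∈ s, ∀ y ∈ t, ⁅x, y⁆ ∈ S) {x y : L} (hx : x ∈ span ℝ s) (hy : y ∈ span ℝ t) :
    ⁅x, y⁆ ∈ S := by
  have : map₂ (LieModule.toEnd ℝ L L : L →ₗ[ℝ] L →ₗ[ℝ] L) (span ℝ s) (span ℝ t) ≤ S := by
    rw [map₂_span_span, span_le]
    rintro _ ⟨x, hx, y, hy, rfl⟩
    exact h x hx y hy
  exact map₂_le.mp this x hx y hy

theorem lcsTop_succ_le {s t : Set L} {S : Submodule ℝ L} (hs : span ℝ s = ⊤) {j : ℕ}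
    (hj : lcsTop L j ≤ span ℝ t) (h : ∀ x ∈ s, ∀ y ∈ t, ⁅x, y⁆ ∈ S) :
    lcsTop L (j + 1) ≤ S :=
  span_le.mpr <| by
    rintro _ ⟨x, y, hy, rfl⟩
    exact lie_mem_of_mem_span h (hs ▸ mem_top) (hj hy)

end LowerCentralSeries

/-- `b i` is the paper's `e_(i+1)`. -/
structure IsTildeG43Basis {L : Type*} [LieRing L] [LieAlgebra ℝ L]
    (b : Module.Basis (Fin 5) ℝ L) : Prop where
  lie_b3_b0 : ⁅b 3, b 0⁆ = b 0
  lie_b3_b2 : ⁅b 3, b 2⁆ = b 1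
  lie_b3_b1 : ⁅b 3, b 1⁆ = b 4
  lie_b0_b1 : ⁅b 0, b 1⁆ = 0
  lie_b0_b2 : ⁅b 0, b 2⁆ = 0
  lie_b1_b2 : ⁅b 1, b 2⁆ = 0
  lie_b4 : ∀ i, ⁅b 4, b i⁆ = 0

namespace IsTildeG43Basis

variable {L : Type*} [LieRing L] [LieAlgebra ℝ L] {b : Module.Basis (Fin 5) ℝ L}

theorem lie_basis (hb : IsTildeG43Basis b) (i j : Fin 5) :
    ⁅b i, b j⁆ = ![![0, 0, 0, -b 0, 0], ![0, 0, 0, -b 4, 0], ![0, 0, 0, -b 1, 0],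
      ![b 0, b 4, b 1, 0, 0], ![0, 0, 0, 0, 0]] i j := by
  obtain ⟨h30, h32, h31, h01, h02, h12, h4⟩ := hb
  fin_cases i <;> fin_cases j <;> first | (simp [*]; done) | (rw [← lie_skew]; simp [*])

theorem lie_mem_span_b0_b1_b4 (hb : IsTildeG43Basis b) (i j : Fin 5) :
    ⁅b i, b j⁆ ∈ span ℝ {b 0, b 1, b 4} := by
  fin_cases i <;> fin_cases j <;> simp [hb.lie_basis, mem_span_of_mem]

theorem lie_mem_span_b0_b4 (hb : IsTildeG43Basis b) (i : Fin 5) {y : L}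
    (hy : y ∈ ({b 0, b 1, b 4} : Set L)) : ⁅b i, y⁆ ∈ span ℝ {b 0, b 4} := by
  rcases hy with rfl | rfl | rfl <;> fin_cases i <;> simp [hb.lie_basis, mem_span_of_mem]

theorem lie_mem_span_b0 (hb : IsTildeG43Basis b) (i : Fin 5) {y : L}
    (hy : y ∈ ({b 0, b 4} : Set L)) : ⁅b i, y⁆ ∈ span ℝ {b 0} := by
  rcases hy with rfl | rfl <;> fin_cases i <;> simp [hb.lie_basis]

theorem lcsTop_one_le (hb : IsTildeG43Basis b) : lcsTop L 1 ≤ span ℝ {b 0, b 1, b 4} :=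
  lcsTop_succ_le b.span_eq (le_top.trans_eq b.span_eq.symm) <| by
    rintro _ ⟨i, rfl⟩ _ ⟨j, rfl⟩
    exact hb.lie_mem_span_b0_b1_b4 i j

theorem lcsTop_two_le (hb : IsTildeG43Basis b) : lcsTop L 2 ≤ span ℝ {b 0, b 4} :=
  lcsTop_succ_le b.span_eq hb.lcsTop_one_le <| by
    rintro _ ⟨i, rfl⟩ y hy
    exact hb.lie_mem_span_b0_b4 i hy

theorem lcsTop_three_le (hb : IsTildeG43Basis b) : lcsTop L 3 ≤ span ℝ {b 0} :=
  lcsTop_succ_le b.span_eq hb.lcsTop_two_le <| by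
    rintro _ ⟨i, rfl⟩ y hy
    exact hb.lie_mem_span_b0 i hy

end IsTildeG43Basis

/-- in the central extension `𝔤̃` of `𝔤₄,₃` with basis `(e₁,…,e₅)` and
nonzero brackets `[e₄,e₁]=e₁`, `[e₄,e₃]=e₂`, `[e₄,e₂]=e₅`, with `e₅` central, the element
`e₅` lies in `C³𝔤̃` but not in `C⁴𝔤̃`: its central depth is exactly 3. -/
theorem statement6 {L : Type*} [LieRing L] [LieAlgebra ℝ L]
    (b : Module.Basis (Fin 5) ℝ L)
    (h41 : ⁅b 3, b 0⁆ = b 0) (h43 : ⁅b 3, b 2⁆ = b 1) (h42 : ⁅b 3, b 1⁆ = b 4)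
    (h12 : ⁅b 0, b 1⁆ = 0) (h13 : ⁅b 0, b 2⁆ = 0) (h23 : ⁅b 1, b 2⁆ = 0)
    (hcentral : ∀ i : Fin 5, ⁅b 4, b i⁆ = 0) :
    b 4 ∈ lcsTop L 2 ∧ b 4 ∉ lcsTop L 3 := by
  have hb : IsTildeG43Basis b := ⟨h41, h43, h42, h12, h13, h23, hcentral⟩
  refine ⟨?_, fun h => ?_⟩
  · rw [← h42, ← h43]
    exact lie_mem_lcsTop_succ _ (lie_mem_lcsTop_succ _ mem_top)
  · exact b.linearIndependent.notMem_span_image (s := {0}) (x := 4) (by decide)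
      (by simpa using hb.lcsTop_three_le h)
end

section
/- Let $\mathfrak{g}_{5,36}$ be the real Lie algebra with basis $(e_1,\dots,e_5)$ and nonzero brackets $[e_1,e_2]=e_3$, $[e_4,e_1]=e_1$, $[e_4,e_3]=e_3$, $[e_5,e_1]=-e_1$, $[e_5,e_2]=e_2$. Then $\mathfrak{g}_{5,36}$ is isomorphic to the Lie algebra of upper triangular traceless $3\times 3$ real matrices (the Borel subalgebra of $\mathfrak{sl}(3,\mathbf{R})$). -/
/- The Borel subalgebra has the basis `E₁₂, E₂₃, E₁₃, H₁, H₂`, where `Hₖ = Eₖₖ - I/3` is the traceless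
part of `Eₖₖ`. The diagonal elements act on `E₁₂, E₂₃, E₁₃` by the weights `(1, 0, 1)` and `(-1, 1, 0)`,
and `[E₁₂, E₂₃] = E₁₃`: these are exactly the brackets of `𝔤₅,₃₆` in its basis `e₁, …, e₅`. So the
linear map sending `e₁, …, e₅` to these matrices is a bijection onto the Borel subalgebra, and it
preserves brackets because, by bilinearity and antisymmetry, this only has to be checked on the ten
pairs `eᵢ, eⱼ` with `i < j`. -/

section LieBracket

variable {R L M ι : Type*} [CommRing R] [LieRing L] [LieAlgebra R L] [LieRing M] [LieAlgebra R M]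

theorem map_lie_swap {f : L →ₗ[R] M} {x y : L} (h : f ⁅y, x⁆ = ⁅f y, f x⁆) :
    f ⁅x, y⁆ = ⁅f x, f y⁆ := by
  rw [← lie_skew, map_neg, h, lie_skew]

theorem Module.Basis.map_lie_of_map_lie_lt [LinearOrder ι] (b : Module.Basis ι R L)
    (f : L →ₗ[R] M) (h : ∀ i j, i < j → f ⁅b i, b j⁆ = ⁅f (b i), f (b j)⁆) (x y : L) :
    f ⁅x, y⁆ = ⁅f x, f y⁆ := by
  let B : L →ₗ[R] L →ₗ[R] M := LinearMap.mk₂ R (fun x y ↦ f ⁅x, y⁆)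
    (by simp [add_lie]) (by simp) (by simp [lie_add]) (by simp)
  let B' : L →ₗ[R] L →ₗ[R] M := LinearMap.mk₂ R (fun x y ↦ ⁅f x, f y⁆)
    (by simp [add_lie]) (by simp) (by simp [lie_add]) (by simp)
  have hB : B = B' := by
    refine LinearMap.ext_basis b b fun i j ↦ ?_
    rcases lt_trichotomy i j with hij | rfl | hji
    · exact h i j hij
    · simp [B, B']
    · exact map_lie_swap (h j i hji)
  exact LinearMap.congr_fun₂ hB x y

end LieBracket

def borelSl (n R : Type*) [CommRing R] [Fintype n] [LinearOrder n] :
    Submodule R (Matrix n n R) where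
  carrier := {A | A.trace = 0 ∧ ∀ i j, j < i → A i j = 0}
  add_mem' ha hb := ⟨by simp [ha.1, hb.1], fun i j hij ↦ by simp [ha.2 i j hij, hb.2 i j hij]⟩
  zero_mem' := ⟨by simp, fun _ _ _ ↦ rfl⟩
  smul_mem' c _ ha := ⟨by simp [ha.1], fun i j hij ↦ by simp [ha.2 i j hij]⟩

noncomputable def borelBasis : Fin 5 → Matrix (Fin 3) (Fin 3) ℝ :=
  ![!![0, 1, 0; 0, 0, 0; 0, 0, 0],
    !![0, 0, 0; 0, 0, 1; 0, 0, 0],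
    !![0, 0, 1; 0, 0, 0; 0, 0, 0],
    !![2/3, 0, 0; 0, -1/3, 0; 0, 0, -1/3],
    !![-1/3, 0, 0; 0, 2/3, 0; 0, 0, -1/3]]

def borelCoord (A : Matrix (Fin 3) (Fin 3) ℝ) : Fin 5 → ℝ :=
  ![A 0 1, A 1 2, A 0 2, 2 * A 0 0 + A 1 1, A 0 0 + 2 * A 1 1]

theorem borelBasis_mem (i : Fin 5) : borelBasis i ∈ borelSl (Fin 3) ℝ := by
  refine ⟨?_, fun k l hlk ↦ ?_⟩
  · fin_cases i <;> simp [borelBasis, Matrix.trace_fin_three] <;> norm_num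
  · fin_cases i <;> fin_cases k <;> fin_cases l <;> simp_all [borelBasis]

theorem borelCoord_sum_smul_borelBasis (c : Fin 5 → ℝ) :
    borelCoord (∑ i, c i • borelBasis i) = c := by
  ext i
  fin_cases i <;> simp [borelCoord, borelBasis, Fin.sum_univ_five] <;> ring

theorem sum_borelCoord_smul_borelBasis {A : Matrix (Fin 3) (Fin 3) ℝ}
    (hA : A ∈ borelSl (Fin 3) ℝ) : ∑ i, borelCoord A i • borelBasis i = A := by
  obtain ⟨htr, hlow⟩ := hA
  rw [Matrix.trace_fin_three] at htr
  ext k l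
  fin_cases k <;> fin_cases l <;>
    simp [borelCoord, borelBasis, Fin.sum_univ_five, hlow] <;> linarith

theorem linearIndependent_borelBasis : LinearIndependent ℝ borelBasis :=
  Fintype.linearIndependent_iff.mpr fun c hc i ↦ by
    rw [← borelCoord_sum_smul_borelBasis c, hc]
    fin_cases i <;> simp [borelCoord]

theorem span_borelBasis : Submodule.span ℝ (Set.range borelBasis) = borelSl (Fin 3) ℝ := by
  refine le_antisymm (Submodule.span_le.mpr (Set.range_subset_iff.mpr borelBasis_mem))
    fun A hA ↦ ?_
  rw [← sum_borelCoord_smul_borelBasis hA]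
  exact Submodule.sum_mem _ fun i _ ↦ Submodule.smul_mem _ _ (Submodule.subset_span ⟨i, rfl⟩)

theorem borelBasis_lie :
    ⁅borelBasis 0, borelBasis 1⁆ = borelBasis 2 ∧ ⁅borelBasis 3, borelBasis 0⁆ = borelBasis 0 ∧
    ⁅borelBasis 3, borelBasis 2⁆ = borelBasis 2 ∧ ⁅borelBasis 4, borelBasis 0⁆ = -borelBasis 0 ∧
    ⁅borelBasis 4, borelBasis 1⁆ = borelBasis 1 ∧ ⁅borelBasis 0, borelBasis 2⁆ = 0 ∧
    ⁅borelBasis 1, borelBasis 2⁆ = 0 ∧ ⁅borelBasis 3, borelBasis 1⁆ = 0 ∧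
    ⁅borelBasis 4, borelBasis 2⁆ = 0 ∧ ⁅borelBasis 3, borelBasis 4⁆ = 0 := by
  refine ⟨?_, ?_, ?_, ?_, ?_, ?_, ?_, ?_, ?_, ?_⟩ <;> ext k l <;> fin_cases k <;> fin_cases l <;>
    simp [borelBasis, Ring.lie_def] <;> norm_num

/-- the Lie algebra `𝔤₅,₃₆` with basis `(e₁,…,e₅)` and nonzero brackets
`[e₁,e₂]=e₃`, `[e₄,e₁]=e₁`, `[e₄,e₃]=e₃`, `[e₅,e₁]=-e₁`, `[e₅,e₂]=e₂` is isomorphic to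
the Borel subalgebra of `𝔰𝔩(3,ℝ)`: the upper triangular traceless `3×3` real matrices. -/
theorem statement9 {L : Type*} [LieRing L] [LieAlgebra ℝ L]
    (b : Module.Basis (Fin 5) ℝ L)
    (h12 : ⁅b 0, b 1⁆ = b 2) (h41 : ⁅b 3, b 0⁆ = b 0) (h43 : ⁅b 3, b 2⁆ = b 2)
    (h51 : ⁅b 4, b 0⁆ = -b 0) (h52 : ⁅b 4, b 1⁆ = b 1)
    (h13 : ⁅b 0, b 2⁆ = 0) (h23 : ⁅b 1, b 2⁆ = 0) (h42 : ⁅b 3, b 1⁆ = 0)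
    (h53 : ⁅b 4, b 2⁆ = 0) (h45 : ⁅b 3, b 4⁆ = 0) :
    ∃ f : L →ₗ[ℝ] Matrix (Fin 3) (Fin 3) ℝ,
      Function.Injective f ∧
      (∀ x y : L, f ⁅x, y⁆ = ⁅f x, f y⁆) ∧
      Set.range f =
        {A : Matrix (Fin 3) (Fin 3) ℝ | Matrix.trace A = 0 ∧ ∀ i j : Fin 3, j < i → A i j = 0} := by
  -- Matrices carry the commutator bracket globally, but the Lie ring structure is only a def.
  let _ := LieRing.ofAssociativeRing (A := Matrix (Fin 3) (Fin 3) ℝ)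
  let _ := LieAlgebra.ofAssociativeAlgebra (R := ℝ) (A := Matrix (Fin 3) (Fin 3) ℝ)
  let f := b.constr ℝ borelBasis
  have hfb : ∀ i, f (b i) = borelBasis i := b.constr_basis ℝ borelBasis
  obtain ⟨m12, m41, m43, m51, m52, m13, m23, m42, m53, m45⟩ := borelBasis_lie
  have hbasis : ∀ i j, i < j → f ⁅b i, b j⁆ = ⁅f (b i), f (b j)⁆ := by
    intro i j hij
    -- a pair whose relation is stated in the order `j, i` is swapped first
    fin_cases i <;> fin_cases j <;> first
      | exact absurd hij (by decide)
      | simp only [Fin.reduceFinMk, hfb, map_zero, h12, h13, h23, h45, m12, m13, m23, m45]; done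
      | apply map_lie_swap
        simp only [Fin.reduceFinMk, hfb, map_neg, map_zero, h41, h43, h51, h52, h42, h53,
          m41, m43, m51, m52, m42, m53]
  refine ⟨f, b.injective_constr_of_linearIndependent linearIndependent_borelBasis,
    b.map_lie_of_map_lie_lt f hbasis, ?_⟩
  rw [← LinearMap.coe_range, b.constr_range, span_borelBasis]
  rfl
end

section
/- Let $f_G, g_G, f_H, g_H: \mathbf{N} \to \mathbf{N}$ be nondecreasing functions with $f_G(n) = n^d$ and $g_G(n) = n^e$ for integers $d, e \geq 1$, and suppose $f_H(n) \preccurlyeq f_G(n \cdot u(n)) \cdot f_H(u(g_G(n \cdot u(n))))$ where $u(n) = \log(2+n)$ and $f_H$ is nondecreasing with $f_H(n) \geq 1$. Then $f_H$ is polynomially bounded. -/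
/-!
The recursion evaluates `f_H` at `m = log₂(2 + (n log n)^e) = O(log n)`, so eventually
`(m + 2)² ≤ n + 2`. A bound `f_H(m) ≤ A (m + 2)^D` therefore costs only `(n + 2)^(D/2)` at
`n`, which leaves room for the polynomial factor `(n log n)^d` of the recursion once `D` is
large; strong induction on `n` closes the argument.
-/

open Filter Topology

theorem eventually_mul_sq_le_two_pow (c : ℕ) : ∀ᶠ t in atTop, c * (t + 1) ^ 2 ≤ 2 ^ t := by
  have hlim : Tendsto (fun t : ℕ => ((t + 1 : ℕ) : ℝ) ^ 2 / 2 ^ (t + 1)) atTop (𝓝 0) :=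
    (tendsto_pow_const_div_const_pow_of_one_lt 2 one_lt_two).comp (tendsto_add_atTop_nat 1)
  filter_upwards [hlim.eventually (gt_mem_nhds (by positivity : (0 : ℝ) < 1 / (2 * (c + 1))))]
    with t ht
  rw [div_lt_div_iff₀ (by positivity) (by positivity), pow_succ (2 : ℝ) t] at ht
  have : ((c + 1) * (t + 1) ^ 2 : ℝ) < 2 ^ t := by push_cast at ht; nlinarith
  have : (c + 1) * (t + 1) ^ 2 < 2 ^ t := by exact_mod_cast this
  nlinarith

theorem Nat.tendsto_log_atTop {b : ℕ} (hb : 1 < b) : Tendsto (Nat.log b) atTop atTop :=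
  tendsto_atTop_atTop.2 fun k => ⟨b ^ k, fun _ h => Nat.le_log_of_pow_le hb h⟩

theorem eventually_sq_mul_log_le (K : ℕ) : ∀ᶠ x in atTop, (K * (Nat.log 2 x + 1)) ^ 2 ≤ x := by
  filter_upwards [(Nat.tendsto_log_atTop one_lt_two).eventually
    (eventually_mul_sq_le_two_pow (K ^ 2)), eventually_ne_atTop 0] with x hx hx0
  calc (K * (Nat.log 2 x + 1)) ^ 2 = K ^ 2 * (Nat.log 2 x + 1) ^ 2 := mul_pow ..
    _ ≤ 2 ^ Nat.log 2 x := hx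
    _ ≤ x := Nat.pow_log_le_self 2 hx0

theorem log_two_le_of_le_mul_pow {b k x y : ℕ} (hx : x ≠ 0) (hy : y ≤ b * x ^ k) :
    Nat.log 2 y ≤ b + k * (Nat.log 2 x + 1) := by
  rcases Nat.eq_zero_or_pos y with rfl | hy0
  · simp
  refine (Nat.log_lt_of_lt_pow hy0.ne' ?_).le
  calc y ≤ b * x ^ k := hy
    _ < 2 ^ b * x ^ k := Nat.mul_lt_mul_of_pos_right Nat.lt_two_pow_self (by positivity)
    _ ≤ 2 ^ b * (2 ^ (Nat.log 2 x + 1)) ^ k := by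
      gcongr; exact (Nat.lt_pow_succ_log_self one_lt_two x).le
    _ = 2 ^ (b + k * (Nat.log 2 x + 1)) := by rw [← pow_mul, ← pow_add, mul_comm k]

theorem log_two_two_add_pow_add_two_le {b e x y : ℕ} (hx : x ≠ 0) (hy : y ≤ b * x ^ 2) :
    Nat.log 2 (2 + y ^ e) + 2 ≤ (b ^ e + 2 * e + 4) * (Nat.log 2 x + 1) := by
  have hye : 2 + y ^ e ≤ (b ^ e + 2) * x ^ (2 * e) := calc
    2 + y ^ e ≤ 2 * x ^ (2 * e) + b ^ e * x ^ (2 * e) := by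
      rw [pow_mul, ← mul_pow]
      gcongr
      exact Nat.le_mul_of_pos_right _ (by positivity)
    _ = (b ^ e + 2) * x ^ (2 * e) := by ring
  nlinarith [log_two_le_of_le_mul_pow hx hye, Nat.zero_le ((b ^ e + 4) * Nat.log 2 x)]

theorem exists_le_mul_pow_of_le_mul_pow_mul_comp {f r : ℕ → ℕ} {a k : ℕ}
    (hr : ∀ᶠ n in atTop, (r n + 2) ^ 2 ≤ n + 2)
    (hf : ∀ᶠ n in atTop, f n ≤ a * (n + 2) ^ k * f (r n) + a * (n + 2)) :
    ∃ A D : ℕ, ∀ n, f n ≤ A * (n + 2) ^ D := by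
  obtain ⟨N, hN⟩ := eventually_atTop.1 (hr.and (hf.and (eventually_ge_atTop a)))
  refine ⟨a + ∑ i ∈ Finset.range N, f i, 2 * (k + 1), fun n => ?_⟩
  set A := a + ∑ i ∈ Finset.range N, f i
  induction n using Nat.strong_induction_on with
  | _ n ih =>
  rcases lt_or_ge n N with hn | hn
  · calc f n ≤ A := le_add_left (Finset.single_le_sum (fun _ _ => Nat.zero_le _)
          (Finset.mem_range.2 hn))
      _ ≤ A * (n + 2) ^ (2 * (k + 1)) := Nat.le_mul_of_pos_right _ (by positivity)
  obtain ⟨hrn, hfn, han⟩ := hN n hn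
  have hlt : r n < n := by nlinarith
  have hfr : f (r n) ≤ A * (n + 2) ^ (k + 1) := calc
    f (r n) ≤ A * ((r n + 2) ^ 2) ^ (k + 1) := by rw [← pow_mul]; exact ih _ hlt
    _ ≤ A * (n + 2) ^ (k + 1) := by gcongr
  have haA : a ≤ A := Nat.le_add_right _ _
  have hx : n + 2 ≤ (n + 2) ^ (2 * k + 1) := Nat.le_self_pow (by omega) _
  calc f n ≤ a * (n + 2) ^ k * (A * (n + 2) ^ (k + 1)) + a * (n + 2) :=
        hfn.trans (by gcongr)
    _ = a * (A * (n + 2) ^ (2 * k + 1)) + a * (n + 2) := by ring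
    _ ≤ a * (A * (n + 2) ^ (2 * k + 1)) + A * (n + 2) ^ (2 * k + 1) := by
      gcongr
    _ = (a + 1) * (A * (n + 2) ^ (2 * k + 1)) := by ring
    _ ≤ (n + 2) * (A * (n + 2) ^ (2 * k + 1)) := by gcongr; omega
    _ = A * (n + 2) ^ (2 * (k + 1)) := by ring

theorem statement15_general (fG gG fH : ℕ → ℕ) (d e : ℕ)
    (hfG : ∀ n, fG n = n ^ d) (hgG : ∀ n, gG n = n ^ e)
    (u : ℕ → ℕ) (hu : ∀ n, u n = Nat.log 2 (2 + n))
    (hrec : ∃ C : ℕ, 0 < C ∧ ∀ n, fH n ≤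
      C * (fG ((C * n + C) * u (C * n + C)) *
            fH (u (gG ((C * n + C) * u (C * n + C))))) + C * n + C) :
    ∃ A D : ℕ, ∀ n, fH n ≤ A * (n + 2) ^ D := by
  obtain ⟨C, -, hC⟩ := hrec
  set p : ℕ → ℕ := fun n => (C * n + C) * u (C * n + C)
  set b := (C + 2) ^ 2
  have hp (n : ℕ) : p n ≤ b * (n + 2) ^ 2 := calc
    p n ≤ (2 + (C * n + C)) ^ 2 := by
      simpa only [p, hu, sq] using Nat.mul_le_mul (by omega) (Nat.log_le_self 2 _)
    _ ≤ b * (n + 2) ^ 2 := by rw [← mul_pow]; gcongr; nlinarith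
  refine exists_le_mul_pow_of_le_mul_pow_mul_comp (r := fun n => u (gG (p n))) (a := C * b ^ d)
    (k := 2 * d) ?_ (Eventually.of_forall fun n => ?_)
  · filter_upwards [(tendsto_add_atTop_nat 2).eventually
      (eventually_sq_mul_log_le (b ^ e + 2 * e + 4))] with n hn
    have hm := log_two_two_add_pow_add_two_le (e := e) (Nat.succ_ne_zero _) (hp n)
    rw [← hgG, ← hu] at hm
    exact (Nat.pow_le_pow_left hm 2).trans hn
  · have hpd : p n ^ d ≤ b ^ d * (n + 2) ^ (2 * d) := by
      rw [pow_mul, ← mul_pow]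
      exact Nat.pow_le_pow_left (hp n) d
    have hb : 1 ≤ b ^ d := Nat.one_le_pow _ _ (by positivity)
    calc fH n ≤ C * (p n ^ d * fH (u (gG (p n)))) + (C * n + C) := by
          simpa only [hfG, add_assoc] using hC n
      _ ≤ C * (b ^ d * (n + 2) ^ (2 * d) * fH (u (gG (p n)))) + C * (n + 2) := by
          gcongr
          linarith
      _ ≤ C * b ^ d * (n + 2) ^ (2 * d) * fH (u (gG (p n))) + C * b ^ d * (n + 2) := by
          nlinarith [Nat.mul_le_mul_left (C * (n + 2)) hb]

/-- if `f_G(n) = n^d`, `g_G(n) = n^e` and the nondecreasing function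
`f_H ≥ 1` satisfies `f_H(n) ≼ f_G(n·u(n)) · f_H(u(g_G(n·u(n))))` with `u(n) = log(2+n)`,
then `f_H` is polynomially bounded. -/
theorem statement15 (fG gG fH gH : ℕ → ℕ) (d e : ℕ) (hd : 1 ≤ d) (he : 1 ≤ e)
    (hfG : ∀ n, fG n = n ^ d) (hgG : ∀ n, gG n = n ^ e)
    (hfH_mono : Monotone fH) (hfH_one : ∀ n, 1 ≤ fH n) (hgH_mono : Monotone gH)
    (u : ℕ → ℕ) (hu : ∀ n, u n = Nat.log 2 (2 + n))
    (hrec : ∃ C : ℕ, 0 < C ∧ ∀ n, fH n ≤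
      C * (fG ((C * n + C) * u (C * n + C)) *
            fH (u (gG ((C * n + C) * u (C * n + C))))) + C * n + C) :
    ∃ A D : ℕ, ∀ n, fH n ≤ A * (n + 2) ^ D :=
  statement15_general fG gG fH d e hfG hgG u hu hrec
end

section
/- Let $\mathfrak{fil}$ be the 4-dimensional filiform Lie algebra with basis $(e_1,e_2,e_3,e_4)$, nonzero brackets $[e_1,e_2]=e_3$, $[e_1,e_3]=e_4$, and let $\mathfrak{g}^1_{5,30} = \mathfrak{fil} \rtimes \mathbf{R}e_5$ where $[e_5,e_1]=e_1$, $[e_5,e_2]=0$, $[e_5,e_3]=e_3$, $[e_5,e_4]=2e_4$. Let $\mathfrak{u} = \operatorname{span}(e_1,e_3,e_4)$. Then $\mathfrak{u}$ is an ideal of $\mathfrak{g}^1_{5,30}$, equal to $C^j\mathfrak{g}^1_{5,30}$ for every $j \geq 2$; in particular the lower central series stabilizes at $\mathfrak{u}$. -/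
section Bracket

variable {R L : Type*} [CommRing R] [LieRing L] [LieAlgebra R L] {U : Submodule R L}

theorem lie_mem_of_span_eq_top {s : Set L} (hs : Submodule.span R s = ⊤)
    (h : ∀ x ∈ s, ∀ y ∈ s, ⁅x, y⁆ ∈ U) (x y : L) : ⁅x, y⁆ ∈ U := by
  have hx : x ∈ Submodule.span R s := hs ▸ Submodule.mem_top
  have hy : y ∈ Submodule.span R s := hs ▸ Submodule.mem_top
  induction hx, hy using Submodule.span_induction₂ with
  | mem_mem x y hx hy => exact h x hx y hy
  | zero_left => simp
  | zero_right => simp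
  | add_left _ _ _ _ _ _ h₁ h₂ => simpa [add_lie] using U.add_mem h₁ h₂
  | add_right _ _ _ _ _ _ h₁ h₂ => simpa [lie_add] using U.add_mem h₁ h₂
  | smul_left r _ _ _ _ h => simpa [smul_lie] using U.smul_mem r h
  | smul_right r _ _ _ _ h => simpa [lie_smul] using U.smul_mem r h

theorem lie_mem_of_basis_lie_mem_of_lt {ι : Type*} [LinearOrder ι] (b : Module.Basis ι R L)
    (h : ∀ i j, i < j → ⁅b i, b j⁆ ∈ U) (x y : L) : ⁅x, y⁆ ∈ U := by
  refine lie_mem_of_span_eq_top b.span_eq ?_ x y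
  rintro _ ⟨i, rfl⟩ _ ⟨j, rfl⟩
  rcases lt_trichotomy i j with hij | rfl | hji
  · exact h i j hij
  · simp
  · simpa using U.neg_mem (h j i hji)

end Bracket

section LowerCentralSeries

variable {L : Type*} [LieRing L] [LieAlgebra ℝ L] {U : Submodule ℝ L}

theorem span_lie_eq_of_le (hLL : ∀ x y : L, ⁅x, y⁆ ∈ U)
    (hU : U ≤ Submodule.span ℝ {z | ∃ x : L, ∃ y ∈ U, z = ⁅x, y⁆}) {V : Submodule ℝ L}
    (hV : U ≤ V) : Submodule.span ℝ {z | ∃ x : L, ∃ y ∈ V, z = ⁅x, y⁆} = U := by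
  refine le_antisymm (Submodule.span_le.2 ?_) (hU.trans (Submodule.span_mono ?_))
  · rintro _ ⟨x, y, -, rfl⟩
    exact hLL x y
  · rintro _ ⟨x, y, hy, rfl⟩
    exact ⟨x, y, hV hy, rfl⟩

theorem lcsTop_succ_eq_of_le_span_lie (hLL : ∀ x y : L, ⁅x, y⁆ ∈ U)
    (hU : U ≤ Submodule.span ℝ {z | ∃ x : L, ∃ y ∈ U, z = ⁅x, y⁆}) (n : ℕ) :
    lcsTop L (n + 1) = U := by
  induction n with
  | zero => exact span_lie_eq_of_le hLL hU le_top
  | succ n ih => exact span_lie_eq_of_le hLL hU ih.ge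

end LowerCentralSeries

/-- in `𝔤₅,₃₀¹ = 𝔣𝔦𝔩 ⋊ ℝe₅` with `[e₁,e₂]=e₃`, `[e₁,e₃]=e₄`,
`[e₅,e₁]=e₁`, `[e₅,e₂]=0`, `[e₅,e₃]=e₃`, `[e₅,e₄]=2e₄`, the subspace
`𝔲 = span(e₁,e₃,e₄)` is an ideal, equal to `C^j 𝔤` for every `j ≥ 2`. -/
theorem statement17 {L : Type*} [LieRing L] [LieAlgebra ℝ L]
    (b : Module.Basis (Fin 5) ℝ L)
    (h12 : ⁅b 0, b 1⁆ = b 2) (h13 : ⁅b 0, b 2⁆ = b 3)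
    (h51 : ⁅b 4, b 0⁆ = b 0) (h52 : ⁅b 4, b 1⁆ = 0)
    (h53 : ⁅b 4, b 2⁆ = b 2) (h54 : ⁅b 4, b 3⁆ = (2 : ℝ) • b 3)
    (h14 : ⁅b 0, b 3⁆ = 0) (h23 : ⁅b 1, b 2⁆ = 0) (h24 : ⁅b 1, b 3⁆ = 0)
    (h34 : ⁅b 2, b 3⁆ = 0) :
    (∀ x : L, ∀ y ∈ Submodule.span ℝ ({b 0, b 2, b 3} : Set L),
      ⁅x, y⁆ ∈ Submodule.span ℝ ({b 0, b 2, b 3} : Set L)) ∧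
    (∀ j : ℕ, 2 ≤ j → lcsTop L (j - 1) = Submodule.span ℝ ({b 0, b 2, b 3} : Set L)) := by
  set U := Submodule.span ℝ ({b 0, b 2, b 3} : Set L)
  have hb0 : b 0 ∈ U := Submodule.subset_span (by simp)
  have hb2 : b 2 ∈ U := Submodule.subset_span (by simp)
  have hb3 : b 3 ∈ U := Submodule.subset_span (by simp)
  have hLL : ∀ x y : L, ⁅x, y⁆ ∈ U := by
    refine lie_mem_of_basis_lie_mem_of_lt b fun i j hij => ?_
    fin_cases i <;> fin_cases j <;> simp at hij <;>
      simp [← lie_skew _ (b 4), h12, h13, h14, h23, h24, h34, h51, h52, h53, h54, hb0, hb2, hb3,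
        U.smul_mem]
  have hU : U ≤ Submodule.span ℝ {z | ∃ x : L, ∃ y ∈ U, z = ⁅x, y⁆} := by
    refine Submodule.span_le.2 ?_
    rintro _ (rfl | rfl | rfl) <;> apply Submodule.subset_span
    exacts [⟨b 4, b 0, hb0, h51.symm⟩, ⟨b 4, b 2, hb2, h53.symm⟩, ⟨b 0, b 2, hb2, h13.symm⟩]
  refine ⟨fun x y _ => hLL x y, fun j hj => ?_⟩
  rw [show j - 1 = j - 2 + 1 by omega]
  exact lcsTop_succ_eq_of_le_span_lie hLL hU (j - 2)
end

section
/- Let $\mathfrak{g}^1_{5,30}$ be the real Lie algebra with basis $(e_1,\dots,e_5)$ and nonzero brackets $[e_1,e_2]=e_3$, $[e_1,e_3]=e_4$, $[e_5,e_1]=e_1$, $[e_5,e_3]=e_3$, $[e_5,e_4]=2e_4$, and let $\mathfrak{u} = \operatorname{span}(e_1,e_3,e_4)$. In the symmetric square $\mathfrak{u} \odot \mathfrak{u}$, let $K$ be the subspace spanned by elements $[x,y]\odot z - x \odot [y,z]$ for $x,y,z \in \mathfrak{u}$. Then $K = \operatorname{span}(e_4\odot e_4,\ e_3 \odot e_4,\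 e_1\odot e_4)$, and in the quotient module $\operatorname{Kill}(\mathfrak{u}) = (\mathfrak{u}\odot\mathfrak{u})/K$ with the action induced by $X\cdot(u\odot v)=[X,u]\odot v + u\odot[X,v]$, the simultaneous kernel of the actions of $e_2$ and $e_5$ is zero. -/
/-!
Every bracket of `𝔲 = span(e₁, e₃, e₄)` lies in `ℝ e₄`, so each relation
`[x,y] ⊙ z - x ⊙ [y,z]` lies in `e₄ ⊙ 𝔲`, and the triples `(e₁,e₃,e₄)`, `(e₁,e₃,e₃)`,
`(e₃,e₁,e₁)` produce the three spanning vectors. Since `ad e₅` preserves `𝔲`, its action is a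
derivation that preserves `K` (Jacobi identity). On the complement `span(e₁⊙e₁, e₁⊙e₃, e₃⊙e₃)`
of `K` it acts as multiplication by `2`, the sum of the `ad e₅`-weights, so `e₅ · w ∈ K` already
forces `w ∈ K`.
-/

open Submodule

theorem mem_of_apply_mem_of_sup_eq_top {𝕜 M : Type*} [Field 𝕜] [AddCommGroup M] [Module 𝕜 M]
    {f : Module.End 𝕜 M} {P W : Submodule 𝕜 M} {μ : 𝕜} (hP : P ≤ P.comap f)
    (hW : W ≤ f.eigenspace μ) (hμ : μ ≠ 0) (hWP : W ⊔ P = ⊤) {v : M} (hv : f v ∈ P) :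
    v ∈ P := by
  obtain ⟨w, hw, p, hp, rfl⟩ := mem_sup.mp (hWP ▸ mem_top : v ∈ W ⊔ P)
  have hμw : μ • w ∈ P := by
    rw [← Module.End.mem_eigenspace_iff.mp (hW hw)]
    simpa using P.sub_mem hv (hP hp)
  exact P.add_mem ((P.smul_mem_iff hμ).mp hμw) hp

section KillingModule

variable {R L S : Type*} [CommRing R] [LieRing L] [LieAlgebra R L] [AddCommGroup S] [Module R S]

def killingRelations (sym : L →ₗ[R] L →ₗ[R] S) (U : Submodule R L) : Set S :=
  {w | ∃ x ∈ U, ∃ y ∈ U, ∃ z ∈ U, w = sym ⁅x, y⁆ z - sym x ⁅y, z⁆}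

theorem span_killingRelations_le_comap {sym : L →ₗ[R] L →ₗ[R] S} {U : Submodule R L}
    {X : L} {act : S →ₗ[R] S}
    (hact : ∀ x ∈ U, ∀ y ∈ U, act (sym x y) = sym ⁅X, x⁆ y + sym x ⁅X, y⁆)
    (hUU : ∀ x ∈ U, ∀ y ∈ U, ⁅x, y⁆ ∈ U) (hXU : ∀ x ∈ U, ⁅X, x⁆ ∈ U) :
    span R (killingRelations sym U) ≤ (span R (killingRelations sym U)).comap act := by
  rw [span_le]
  rintro _ ⟨x, hx, y, hy, z, hz, rfl⟩
  have hsplit : act (sym ⁅x, y⁆ z - sym x ⁅y, z⁆) =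
      (sym ⁅⁅X, x⁆, y⁆ z - sym ⁅X, x⁆ ⁅y, z⁆) + (sym ⁅x, ⁅X, y⁆⁆ z - sym x ⁅⁅X, y⁆, z⁆)
        + (sym ⁅x, y⁆ ⁅X, z⁆ - sym x ⁅y, ⁅X, z⁆⁆) := by
    rw [map_sub, hact _ (hUU x hx y hy) z hz, hact x hx _ (hUU y hy z hz), leibniz_lie X x y,
      leibniz_lie X y z]
    simp only [map_add, LinearMap.add_apply]
    abel
  rw [SetLike.mem_coe, mem_comap, hsplit]
  refine add_mem (add_mem (subset_span ?_) (subset_span ?_)) (subset_span ?_)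
  exacts [⟨_, hXU x hx, y, hy, z, hz, rfl⟩, ⟨x, hx, _, hXU y hy, z, hz, rfl⟩,
    ⟨x, hx, y, hy, _, hXU z hz, rfl⟩]

theorem apply_sym_eq_smul {sym : L →ₗ[R] L →ₗ[R] S} {U : Submodule R L} {X x y : L}
    {act : S →ₗ[R] S} (hact : ∀ x ∈ U, ∀ y ∈ U, act (sym x y) = sym ⁅X, x⁆ y + sym x ⁅X, y⁆)
    (hx : x ∈ U) (hy : y ∈ U) {a c : R} (hXx : ⁅X, x⁆ = a • x) (hXy : ⁅X, y⁆ = c • y) :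
    act (sym x y) = (a + c) • sym x y := by
  rw [hact x hx y hy, hXx, hXy, map_smul, LinearMap.smul_apply, map_smul, add_smul]

theorem lie_mem_span_of_forall_lie_mem {X : L} {t : Set L} (ht : ∀ e ∈ t, ⁅X, e⁆ ∈ span R t)
    {x : L} (hx : x ∈ span R t) : ⁅X, x⁆ ∈ span R t :=
  (span_le (p := (span R t).comap (LieAlgebra.ad R L X))).mpr ht hx

variable {e₁ e₃ e₄ : L}

theorem lie_mem_span_singleton (h13 : ⁅e₁, e₃⁆ = e₄) (h14 : ⁅e₁, e₄⁆ = 0) (h34 : ⁅e₃, e₄⁆ = 0)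
    {x y : L} (hx : x ∈ span R {e₁, e₃, e₄}) (hy : y ∈ span R {e₁, e₃, e₄}) :
    ⁅x, y⁆ ∈ R ∙ e₄ := by
  have hmem := apply_mem_map₂ (LieAlgebra.ad R L : L →ₗ[R] Module.End R L) hx hy
  rw [map₂_span_span] at hmem
  refine span_le.mpr ?_ hmem
  have h31 : ⁅e₃, e₁⁆ = -e₄ := by rw [← lie_skew, h13]
  have h41 : ⁅e₄, e₁⁆ = 0 := by rw [← lie_skew, h14, neg_zero]
  have h43 : ⁅e₄, e₃⁆ = 0 := by rw [← lie_skew, h34, neg_zero]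
  rintro _ ⟨u, hu, v, hv, rfl⟩
  simp only [Set.mem_insert_iff, Set.mem_singleton_iff] at hu hv
  rcases hu with rfl | rfl | rfl <;> rcases hv with rfl | rfl | rfl <;>
    simp [h13, h14, h34, h31, h41, h43, mem_span_singleton_self]

theorem span_killingRelations_eq {sym : L →ₗ[R] L →ₗ[R] S} (hsym : ∀ x y : L, sym x y = sym y x)
    (h13 : ⁅e₁, e₃⁆ = e₄) (h14 : ⁅e₁, e₄⁆ = 0) (h34 : ⁅e₃, e₄⁆ = 0) :
    span R (killingRelations sym (span R {e₁, e₃, e₄})) =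
      span R {sym e₄ e₄, sym e₃ e₄, sym e₁ e₄} := by
  set U := span R {e₁, e₃, e₄}
  have hT : span R {sym e₄ e₄, sym e₃ e₄, sym e₁ e₄} = U.map (sym.flip e₄) := by
    rw [map_span]
    congr 1
    ext
    simp only [Set.mem_insert_iff, Set.mem_singleton_iff, Set.image_insert_eq, Set.image_singleton,
      LinearMap.flip_apply]
    tauto
  have h1 : e₁ ∈ U := subset_span (by simp)
  have h3 : e₃ ∈ U := subset_span (by simp)
  have h4 : e₄ ∈ U := subset_span (by simp)
  apply le_antisymm
  · rw [span_le, hT]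
    rintro _ ⟨x, hx, y, hy, z, hz, rfl⟩
    obtain ⟨r, hr⟩ := mem_span_singleton.mp (lie_mem_span_singleton h13 h14 h34 hx hy)
    obtain ⟨t, ht⟩ := mem_span_singleton.mp (lie_mem_span_singleton h13 h14 h34 hy hz)
    rw [← hr, ← ht, map_smul, LinearMap.smul_apply, map_smul, hsym e₄ z]
    exact sub_mem (smul_mem _ r (mem_map_of_mem hz)) (smul_mem _ t (mem_map_of_mem hx))
  · rw [span_le]
    rintro _ (rfl | rfl | rfl)
    · exact subset_span ⟨e₁, h1, e₃, h3, e₄, h4, by simp [h13, h34]⟩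
    · exact subset_span ⟨e₁, h1, e₃, h3, e₃, h3, by simp [h13, hsym e₃ e₄]⟩
    -- `(e₁, e₃, e₁)` would only give `2 • sym e₁ e₄`
    · refine neg_mem_iff.mp (subset_span ⟨e₃, h3, e₁, h1, e₁, h1, ?_⟩)
      simp [← lie_skew e₃, h13, hsym e₁ e₄]

end KillingModule

theorem statement18_general {L S : Type*} [LieRing L] [LieAlgebra ℝ L]
    [AddCommGroup S] [Module ℝ S]
    (b : Module.Basis (Fin 5) ℝ L)
    (h13 : ⁅b 0, b 2⁆ = b 3)
    (h51 : ⁅b 4, b 0⁆ = b 0)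
    (h53 : ⁅b 4, b 2⁆ = b 2) (h54 : ⁅b 4, b 3⁆ = (2 : ℝ) • b 3)
    (h14 : ⁅b 0, b 3⁆ = 0)
    (h34 : ⁅b 2, b 3⁆ = 0)
    (U : Submodule ℝ L) (hU : U = Submodule.span ℝ ({b 0, b 2, b 3} : Set L))
    -- `S` models the symmetric square `𝔲 ⊙ 𝔲`
    (sym : L →ₗ[ℝ] L →ₗ[ℝ] S) (hsym : ∀ x y : L, sym x y = sym y x)
    (s : Module.Basis (Fin 6) ℝ S)
    (hs0 : s 0 = sym (b 0) (b 0)) (hs1 : s 1 = sym (b 0) (b 2))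
    (hs2 : s 2 = sym (b 0) (b 3)) (hs3 : s 3 = sym (b 2) (b 2))
    (hs4 : s 4 = sym (b 2) (b 3)) (hs5 : s 5 = sym (b 3) (b 3))
    (K : Submodule ℝ S)
    (hK : K = Submodule.span ℝ
      {w : S | ∃ x ∈ U, ∃ y ∈ U, ∃ z ∈ U, w = sym ⁅x, y⁆ z - sym x ⁅y, z⁆})
    -- the induced derivation action of `L` on `𝔲 ⊙ 𝔲`
    (act : L → S →ₗ[ℝ] S)
    (hact : ∀ X : L, ∀ x ∈ U, ∀ y ∈ U,
      act X (sym x y) = sym ⁅X, x⁆ y + sym x ⁅X, y⁆) :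
    K = Submodule.span ℝ
        ({sym (b 3) (b 3), sym (b 2) (b 3), sym (b 0) (b 3)} : Set S) ∧
    (∀ w : S, act (b 1) w ∈ K → act (b 4) w ∈ K → w ∈ K) := by
  have h0 : b 0 ∈ U := hU ▸ subset_span (by simp)
  have h2 : b 2 ∈ U := hU ▸ subset_span (by simp)
  have h3 : b 3 ∈ U := hU ▸ subset_span (by simp)
  have hKeq : K = span ℝ {sym (b 3) (b 3), sym (b 2) (b 3), sym (b 0) (b 3)} :=
    hK.trans (hU ▸ span_killingRelations_eq hsym h13 h14 h34)
  refine ⟨hKeq, fun w _ hw ↦ ?_⟩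
  have hUU : ∀ x ∈ U, ∀ y ∈ U, ⁅x, y⁆ ∈ U := fun x hx y hy ↦
    (span_singleton_le_iff_mem _ _).mpr h3 (lie_mem_span_singleton h13 h14 h34 (hU ▸ hx) (hU ▸ hy))
  have h5U : ∀ x ∈ U, ⁅b 4, x⁆ ∈ U := by
    rw [hU]
    exact fun x ↦ lie_mem_span_of_forall_lie_mem
      (by rintro _ (rfl | rfl | rfl) <;> simp [h51, h53, h54, ← hU, h0, h2, h3])
  have h51' : ⁅b 4, b 0⁆ = (1 : ℝ) • b 0 := by rw [h51, one_smul]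
  have h53' : ⁅b 4, b 2⁆ = (1 : ℝ) • b 2 := by rw [h53, one_smul]
  refine mem_of_apply_mem_of_sup_eq_top (W := span ℝ {s 0, s 1, s 3}) (μ := 2)
    (hK ▸ span_killingRelations_le_comap (hact (b 4)) hUU h5U) ?_ two_ne_zero ?_ hw
  · rw [span_le, ← one_add_one_eq_two]
    rintro _ (rfl | rfl | rfl) <;> rw [SetLike.mem_coe, Module.End.mem_eigenspace_iff]
    · rw [hs0]; exact apply_sym_eq_smul (hact (b 4)) h0 h0 h51' h51'
    · rw [hs1]; exact apply_sym_eq_smul (hact (b 4)) h0 h2 h51' h53'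
    · rw [hs3]; exact apply_sym_eq_smul (hact (b 4)) h2 h2 h53' h53'
  · rw [hKeq, ← hs5, ← hs4, ← hs2, ← span_union, eq_top_iff, ← s.span_eq, span_le]
    rintro _ ⟨i, rfl⟩
    exact subset_span (by fin_cases i <;> simp)

/-- in `𝔤₅,₃₀¹` with `𝔲 = span(e₁,e₃,e₄)`, the submodule `K` of the
symmetric square `𝔲 ⊙ 𝔲` spanned by `[x,y] ⊙ z - x ⊙ [y,z]` for `x,y,z ∈ 𝔲` equals
`span(e₄⊙e₄, e₃⊙e₄, e₁⊙e₄)`, and in the Killing module `(𝔲⊙𝔲)/K` the simultaneous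
kernel of the actions of `e₂` and `e₅` is zero. -/
theorem statement18 {L S : Type*} [LieRing L] [LieAlgebra ℝ L]
    [AddCommGroup S] [Module ℝ S]
    (b : Module.Basis (Fin 5) ℝ L)
    (h12 : ⁅b 0, b 1⁆ = b 2) (h13 : ⁅b 0, b 2⁆ = b 3)
    (h51 : ⁅b 4, b 0⁆ = b 0) (h52 : ⁅b 4, b 1⁆ = 0)
    (h53 : ⁅b 4, b 2⁆ = b 2) (h54 : ⁅b 4, b 3⁆ = (2 : ℝ) • b 3)
    (h14 : ⁅b 0, b 3⁆ = 0) (h23 : ⁅b 1, b 2⁆ = 0) (h24 : ⁅b 1, b 3⁆ = 0)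
    (h34 : ⁅b 2, b 3⁆ = 0)
    (U : Submodule ℝ L) (hU : U = Submodule.span ℝ ({b 0, b 2, b 3} : Set L))
    -- `S` models the symmetric square `𝔲 ⊙ 𝔲`
    (sym : L →ₗ[ℝ] L →ₗ[ℝ] S) (hsym : ∀ x y : L, sym x y = sym y x)
    (s : Module.Basis (Fin 6) ℝ S)
    (hs0 : s 0 = sym (b 0) (b 0)) (hs1 : s 1 = sym (b 0) (b 2))
    (hs2 : s 2 = sym (b 0) (b 3)) (hs3 : s 3 = sym (b 2) (b 2))
    (hs4 : s 4 = sym (b 2) (b 3)) (hs5 : s 5 = sym (b 3) (b 3))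
    (K : Submodule ℝ S)
    (hK : K = Submodule.span ℝ
      {w : S | ∃ x ∈ U, ∃ y ∈ U, ∃ z ∈ U, w = sym ⁅x, y⁆ z - sym x ⁅y, z⁆})
    -- the induced derivation action of `L` on `𝔲 ⊙ 𝔲`
    (act : L → S →ₗ[ℝ] S)
    (hact : ∀ X : L, ∀ x ∈ U, ∀ y ∈ U,
      act X (sym x y) = sym ⁅X, x⁆ y + sym x ⁅X, y⁆) :
    K = Submodule.span ℝ
        ({sym (b 3) (b 3), sym (b 2) (b 3), sym (b 0) (b 3)} : Set S) ∧
    (∀ w : S, act (b 1) w ∈ K → act (b 4) w ∈ K → w ∈ K) :=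
  statement18_general b h13 h51 h53 h54 h14 h34 U hU sym hsym s hs0 hs1 hs2 hs3 hs4 hs5 K hK act
    hact
end

section
/- Let $\mathfrak{g}^{\gamma}_{5,8}$ be the real Lie algebra with basis $(e_1,\dots,e_5)$ and nonzero brackets $[e_5,e_2]=e_1$, $[e_5,e_3]=e_3$, $[e_5,e_4]=\gamma e_4$ with $\gamma \neq 0$. Let $\mathfrak{u} = \operatorname{span}(e_3, e_4)$. Then $\mathfrak{u}$ is an ideal of $\mathfrak{g}^{\gamma}_{5,8}$, the quotient $\mathfrak{g}^{\gamma}_{5,8}/\mathfrak{u}$ is isomorphic to the 3-dimensional Heisenberg Lie algebra, and there is no abelian Lie subalgebra of $\mathfrak{g}^{\gamma}_{5,8}$ complementary to $\mathfrak{u}$ as a vector space. -/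
/-!
Projecting onto the coordinates of `e₅, e₂, e₁` and sending them to the Heisenberg generators
`x, y` and `z = [x, y]` is a Lie algebra map onto the Heisenberg algebra, with kernel `𝔲`; in
particular `𝔲` is an ideal. If `V` were a complement of `𝔲`, this map would send `V` onto the
whole Heisenberg algebra, so `V` cannot be abelian: `[x, y] = z ≠ 0`.
-/

theorem LinearMap.map_lie_of_basis {ι R L L' : Type*} [Fintype ι] [LinearOrder ι] [CommRing R]
    [LieRing L] [LieAlgebra R L] [LieRing L'] [LieAlgebra R L']
    (b : Module.Basis ι R L) (f : L →ₗ[R] L')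
    (h : ∀ i j, i < j → f ⁅b i, b j⁆ = ⁅f (b i), f (b j)⁆) (x y : L) :
    f ⁅x, y⁆ = ⁅f x, f y⁆ := by
  have hb : ∀ i j, f ⁅b i, b j⁆ = ⁅f (b i), f (b j)⁆ := by
    intro i j
    rcases lt_trichotomy i j with hij | rfl | hji
    · exact h i j hij
    · simp
    · rw [← lie_skew, map_neg, h j i hji, lie_skew]
  rw [← b.sum_repr x, ← b.sum_repr y]
  simp only [sum_lie, lie_sum, smul_lie, lie_smul, map_sum, map_smul, hb]

theorem LinearMap.lie_apply_eq_zero_of_codisjoint_ker {R L L' : Type*} [CommRing R]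
    [LieRing L] [LieAlgebra R L] [AddCommGroup L'] [Module R L'] [Bracket L' L']
    {f : L →ₗ[R] L'} (hf : ∀ x y, f ⁅x, y⁆ = ⁅f x, f y⁆) {V : Submodule R L}
    (hV : ∀ v ∈ V, ∀ w ∈ V, ⁅v, w⁆ = 0) (hc : Codisjoint (LinearMap.ker f) V) (x y : L) :
    ⁅f x, f y⁆ = 0 := by
  have hrange : V.map f = LinearMap.range f := Submodule.map_eq_range_iff.2 hc.symm
  obtain ⟨v, hv, hvx⟩ : f x ∈ V.map f := hrange ▸ LinearMap.mem_range_self f x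
  obtain ⟨w, hw, hwy⟩ : f y ∈ V.map f := hrange ▸ LinearMap.mem_range_self f y
  rw [← hvx, ← hwy, ← hf, hV v hv w hw, map_zero]

section Heisenberg

variable {R : Type*} [CommRing R]

def heisMatrix (x y z : R) : Matrix (Fin 3) (Fin 3) R := !![0, x, z; 0, 0, y; 0, 0, 0]

theorem heisMatrix_lie (x y z x' y' z' : R) :
    ⁅heisMatrix x y z, heisMatrix x' y' z'⁆ = heisMatrix 0 0 (x * y' - y * x') := by
  ext i j
  fin_cases i <;> fin_cases j <;> simp [heisMatrix, Ring.lie_def, mul_comm]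

@[simp]
theorem heisMatrix_eq_zero_iff {x y z : R} :
    heisMatrix x y z = 0 ↔ x = 0 ∧ y = 0 ∧ z = 0 := by
  refine ⟨fun h => ⟨congr_fun₂ h 0 1, congr_fun₂ h 1 2, congr_fun₂ h 0 2⟩, ?_⟩
  rintro ⟨rfl, rfl, rfl⟩
  ext i j
  fin_cases i <;> fin_cases j <;> rfl

theorem range_heisMatrix :
    Set.range (fun p : R × R × R => heisMatrix p.1 p.2.1 p.2.2) =
      {A : Matrix (Fin 3) (Fin 3) R | ∀ i j : Fin 3, ¬ i < j → A i j = 0} := by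
  ext A
  constructor
  · rintro ⟨p, rfl⟩ i j hij
    fin_cases i <;> fin_cases j <;> simp_all [heisMatrix]
  · intro hA
    refine ⟨(A 0 1, A 1 2, A 0 2), ?_⟩
    ext i j
    fin_cases i <;> fin_cases j <;> simp [heisMatrix] <;> exact (hA _ _ (by decide)).symm

variable {M : Type*} [AddCommGroup M] [Module R M]

/-- With `b i = e_{i+1}`, the entries `x, y, z` are the coordinates of `e₅, e₂, e₁`. -/
noncomputable def heisProj (b : Module.Basis (Fin 5) R M) : M →ₗ[R] Matrix (Fin 3) (Fin 3) R where
  toFun v := heisMatrix (b.repr v 4) (b.repr v 1) (b.repr v 0)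
  map_add' v w := by
    ext i j
    fin_cases i <;> fin_cases j <;> simp [heisMatrix]
  map_smul' c v := by
    ext i j
    fin_cases i <;> fin_cases j <;> simp [heisMatrix]

theorem heisProj_apply (b : Module.Basis (Fin 5) R M) (v : M) :
    heisProj b v = heisMatrix (b.repr v 4) (b.repr v 1) (b.repr v 0) :=
  rfl

theorem ker_heisProj (b : Module.Basis (Fin 5) R M) :
    LinearMap.ker (heisProj b) = Submodule.span R {b 2, b 3} := by
  ext v
  rw [LinearMap.mem_ker, heisProj_apply, heisMatrix_eq_zero_iff, ← Set.image_pair,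
    b.mem_span_image, Finsupp.support_subset_iff]
  simp only [Set.mem_insert_iff, Set.mem_singleton_iff, not_or, Fin.forall_fin_succ]
  grind

theorem range_heisProj (b : Module.Basis (Fin 5) R M) :
    Set.range (heisProj b) =
      {A : Matrix (Fin 3) (Fin 3) R | ∀ i j : Fin 3, ¬ i < j → A i j = 0} := by
  rw [← range_heisMatrix]
  ext A
  constructor
  · rintro ⟨v, rfl⟩
    exact ⟨(b.repr v 4, b.repr v 1, b.repr v 0), rfl⟩
  · rintro ⟨⟨x, y, z⟩, rfl⟩
    exact ⟨x • b 4 + y • b 1 + z • b 0, by simp [heisProj_apply]⟩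

attribute [local instance] LieRing.ofAssociativeRing LieAlgebra.ofAssociativeAlgebra

theorem heisProj_lie {L : Type*} [LieRing L] [LieAlgebra R L]
    (b : Module.Basis (Fin 5) R L) (γ : R)
    (h52 : ⁅b 4, b 1⁆ = b 0) (h53 : ⁅b 4, b 2⁆ = b 2) (h54 : ⁅b 4, b 3⁆ = γ • b 3)
    (h51 : ⁅b 4, b 0⁆ = 0)
    (h12 : ⁅b 0, b 1⁆ = 0) (h13 : ⁅b 0, b 2⁆ = 0) (h14 : ⁅b 0, b 3⁆ = 0)
    (h23 : ⁅b 1, b 2⁆ = 0) (h24 : ⁅b 1, b 3⁆ = 0) (h34 : ⁅b 2, b 3⁆ = 0) (x y : L) :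
    heisProj b ⁅x, y⁆ = ⁅heisProj b x, heisProj b y⁆ := by
  refine LinearMap.map_lie_of_basis b _ (fun i j hij => ?_) x y
  fin_cases i <;> fin_cases j <;> try exact absurd hij (by decide)
  all_goals simp [← lie_skew (b _) (b 4), h52, h53, h54, h51, h12, h13, h14, h23, h24, h34,
    heisProj_apply, heisMatrix_lie]

end Heisenberg

theorem statement19_general {L : Type*} [LieRing L] [LieAlgebra ℝ L]
    (b : Module.Basis (Fin 5) ℝ L) (γ : ℝ)
    (h52 : ⁅b 4, b 1⁆ = b 0) (h53 : ⁅b 4, b 2⁆ = b 2) (h54 : ⁅b 4, b 3⁆ = γ • b 3)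
    (h51 : ⁅b 4, b 0⁆ = 0)
    (h12 : ⁅b 0, b 1⁆ = 0) (h13 : ⁅b 0, b 2⁆ = 0) (h14 : ⁅b 0, b 3⁆ = 0)
    (h23 : ⁅b 1, b 2⁆ = 0) (h24 : ⁅b 1, b 3⁆ = 0) (h34 : ⁅b 2, b 3⁆ = 0)
    (U : Submodule ℝ L) (hU : U = Submodule.span ℝ ({b 2, b 3} : Set L)) :
    (∀ x : L, ∀ y ∈ U, ⁅x, y⁆ ∈ U) ∧
    (∃ f : L →ₗ[ℝ] Matrix (Fin 3) (Fin 3) ℝ,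
      (∀ x y : L, f ⁅x, y⁆ = ⁅f x, f y⁆) ∧
      LinearMap.ker f = U ∧
      Set.range f =
        {A : Matrix (Fin 3) (Fin 3) ℝ | ∀ i j : Fin 3, ¬ i < j → A i j = 0}) ∧
    ¬ ∃ V : LieSubalgebra ℝ L,
        (∀ x ∈ V, ∀ y ∈ V, ⁅x, y⁆ = (0 : L)) ∧ IsCompl U (V : Submodule ℝ L) := by
  have hlie := heisProj_lie b γ h52 h53 h54 h51 h12 h13 h14 h23 h24 h34
  rw [hU, ← ker_heisProj b]
  refine ⟨fun x y hy => ?_, ⟨heisProj b, hlie, rfl, range_heisProj b⟩, ?_⟩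
  · rw [LinearMap.mem_ker] at hy ⊢
    rw [hlie, hy, Ring.lie_def, mul_zero, zero_mul, sub_zero]
  · rintro ⟨V, hV, hc⟩
    have h := LinearMap.lie_apply_eq_zero_of_codisjoint_ker hlie (V := V.toSubmodule) hV
      hc.codisjoint (b 4) (b 1)
    simp [heisProj_apply, heisMatrix_lie] at h

/-- in `𝔤₅,₈^γ` (basis `(e₁,…,e₅)`, nonzero brackets `[e₅,e₂]=e₁`,
`[e₅,e₃]=e₃`, `[e₅,e₄]=γe₄`, `γ ≠ 0`), the subspace `𝔲 = span(e₃,e₄)` is an ideal, the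
quotient `𝔤/𝔲` is isomorphic to the 3-dimensional Heisenberg Lie algebra (realized here
as the strictly upper triangular `3×3` matrices, via a surjective bracket-preserving map
with kernel `𝔲`), and there is no abelian Lie subalgebra complementary to `𝔲`. -/
theorem statement19 {L : Type*} [LieRing L] [LieAlgebra ℝ L]
    (b : Module.Basis (Fin 5) ℝ L) (γ : ℝ) (hγ : γ ≠ 0)
    (h52 : ⁅b 4, b 1⁆ = b 0) (h53 : ⁅b 4, b 2⁆ = b 2) (h54 : ⁅b 4, b 3⁆ = γ • b 3)
    (h51 : ⁅b 4, b 0⁆ = 0)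
    (h12 : ⁅b 0, b 1⁆ = 0) (h13 : ⁅b 0, b 2⁆ = 0) (h14 : ⁅b 0, b 3⁆ = 0)
    (h23 : ⁅b 1, b 2⁆ = 0) (h24 : ⁅b 1, b 3⁆ = 0) (h34 : ⁅b 2, b 3⁆ = 0)
    (U : Submodule ℝ L) (hU : U = Submodule.span ℝ ({b 2, b 3} : Set L)) :
    (∀ x : L, ∀ y ∈ U, ⁅x, y⁆ ∈ U) ∧
    (∃ f : L →ₗ[ℝ] Matrix (Fin 3) (Fin 3) ℝ,
      (∀ x y : L, f ⁅x, y⁆ = ⁅f x, f y⁆) ∧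
      LinearMap.ker f = U ∧
      Set.range f =
        {A : Matrix (Fin 3) (Fin 3) ℝ | ∀ i j : Fin 3, ¬ i < j → A i j = 0}) ∧
    ¬ ∃ V : LieSubalgebra ℝ L,
        (∀ x ∈ V, ∀ y ∈ V, ⁅x, y⁆ = (0 : L)) ∧ IsCompl U (V : Submodule ℝ L) :=
  statement19_general b γ h52 h53 h54 h51 h12 h13 h14 h23 h24 h34 U hU
end
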